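/- Fix m ≥ 1, compact Θ ⊂ R^d, integers k_1,…,k_m, M ≥ 1, λ > 0, and true distributions P^1,…,P^m ∈ P_2(Θ). Define f_n(G⃗, H) = Σ_j W_2^2(G_j, P^j_{n_j}) + λ W_2^2(H, (1/m) Σ_j δ_{G_j}) using empirical measures P^j_{n_j}, and f(G⃗, H) the same with P^j in place of P^j_{n_j}. Then | inf f_n^{1/2} − inf f^{1/2} | ≤ Σ_{j=1}^m W_2(P^j_{n_j}, P^j), where the infima are over G_j ∈ O_{k_j}(Θ) and H ∈ E_M(P_2(Θ)). -/

import Mathlib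

open MeasureTheory ENNReal

/-- The set of couplings of two measures: probability measures on the product
with the prescribed marginals. -/
def couplings {α : Type*} [MeasurableSpace α] (μ ν : Measure α) :
    Set (Measure (α × α)) :=
  {π | IsProbabilityMeasure π ∧ π.map Prod.fst = μ ∧ π.map Prod.snd = ν}

/-- Optimal transport cost between two measures for a cost function `c`. -/
noncomputable def Wcost {α : Type*} [MeasurableSpace α] (c : α → α → ℝ≥0∞)
    (μ ν : Measure α) : ℝ≥0∞ :=
  ⨅ π ∈ couplings μ ν, ∫⁻ p, c p.1 p.2 ∂π

/-- Squared second-order Wasserstein distance. -/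
noncomputable def W2sq {α : Type*} [MeasurableSpace α] [PseudoMetricSpace α]
    (μ ν : Measure α) : ℝ≥0∞ :=
  Wcost (fun x y => ENNReal.ofReal (dist x y ^ 2)) μ ν


/-- `O_k(Θ)`: probability measures with at most `k` support points, all in `Θ`. -/
def OkSet {α : Type*} [MeasurableSpace α] (Θ : Set α) (k : ℕ) : Set (Measure α) :=
  {G | IsProbabilityMeasure G ∧
    ∃ s : Finset α, ↑s ⊆ Θ ∧ s.card ≤ k ∧ G ((↑s : Set α))ᶜ = 0}

/-- `E_M(P_2(Θ))`: probability measures on the space of measures, supported on exactly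
`M` atoms, each atom being a probability measure supported in `Θ`. -/
def EMSet {α : Type*} [MeasurableSpace α] (Θ : Set α) (M : ℕ) :
    Set (Measure (Measure α)) :=
  {H | IsProbabilityMeasure H ∧
    ∃ (a : Fin M → Measure α) (w : Fin M → ℝ≥0∞),
      Function.Injective a ∧ (∀ i, w i ≠ 0) ∧
      (∀ i, IsProbabilityMeasure (a i) ∧ (a i) Θᶜ = 0) ∧
      H = ∑ i, w i • Measure.dirac (a i)}

/-- The MWM objective with data measures `P j`: `Σ_j W_2²(G_j, P_j) + λ W_2²(H, (1/m)Σ_j δ_{G_j})`,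
infimized over `G_j ∈ O_{k_j}(Θ)` and `H ∈ E_M(P_2(Θ))`. Here the outer `W_2²` uses
ground cost `W2sq`. -/
noncomputable def mwmInf {α : Type*} [MeasurableSpace α] [PseudoMetricSpace α]
    (Θ : Set α) (m : ℕ) (k : Fin m → ℕ) (M : ℕ) (lam : ℝ)
    (P : Fin m → Measure α) : ℝ≥0∞ :=
  ⨅ G ∈ {G : Fin m → Measure α | ∀ j, G j ∈ OkSet Θ (k j)},
  ⨅ H ∈ EMSet Θ M,
    (∑ j, W2sq (G j) (P j)) +
      ENNReal.ofReal lam *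
        Wcost (fun μ ν => W2sq μ ν) H ((m : ℝ≥0∞)⁻¹ • ∑ j, Measure.dirac (G j))

/-! The objective with data `Q` differs from the one with data `P` only in the terms
`W₂²(G_j, ·)`. The triangle inequality `W₂(G_j, Q_j) ≤ W₂(G_j, P_j) + W₂(P_j, Q_j)` (proved by
gluing two couplings along their common marginal) and Minkowski's inequality in `ℓ²` give
`√f_Q ≤ √f_P + Σ_j W₂(P_j, Q_j)` at every `(G, H)`, hence for the infima; exchanging `P` and `Q`
gives the other half of the bound. Compactness of `Θ` keeps every `W₂(P_j, Q_j)` finite, so the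
bound survives the passage to real numbers. -/

open ProbabilityTheory

namespace ENNReal

lemma iInf_rpow {ι : Sort*} {p : ℝ} (hp : 0 < p) (f : ι → ℝ≥0∞) :
    (⨅ i, f i) ^ p = ⨅ i, f i ^ p :=
  (orderIsoRpow p hp).map_iInf f

lemma iInf_rpow_le_iInf_rpow_add {ι : Sort*} {p : ℝ} (hp : 0 < p) {f g : ι → ℝ≥0∞}
    {c : ℝ≥0∞} (h : ∀ i, f i ^ p ≤ g i ^ p + c) : (⨅ i, f i) ^ p ≤ (⨅ i, g i) ^ p + c := by
  rw [iInf_rpow hp, iInf_rpow hp, ENNReal.iInf_add]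
  exact le_iInf fun i => (iInf_le _ i).trans (h i)

lemma rpow_half_add_le_of_le {a b w : ℝ≥0∞} (h : a ^ (1/2 : ℝ) ≤ b ^ (1/2 : ℝ) + w)
    (S : ℝ≥0∞) : (a + S) ^ (1/2 : ℝ) ≤ (b + S) ^ (1/2 : ℝ) + w := by
  have hsq (x : ℝ≥0∞) : (x ^ (1/2 : ℝ)) ^ 2 = x := by
    rw [← rpow_two, ← rpow_mul]; norm_num
  have hle_iff (x y : ℝ≥0∞) : x ^ (1/2 : ℝ) ≤ y ↔ x ≤ y ^ 2 := by
    rw [one_div, rpow_inv_le_iff two_pos, rpow_two]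
  have hb : b ^ (1/2 : ℝ) ≤ (b + S) ^ (1/2 : ℝ) := rpow_le_rpow le_self_add (by norm_num)
  rw [hle_iff]
  calc a + S ≤ (b ^ (1/2 : ℝ) + w) ^ 2 + S := by gcongr; exact (hle_iff _ _).1 h
    _ = b + S + 2 * b ^ (1/2 : ℝ) * w + w ^ 2 := by rw [add_sq, hsq]; ring
    _ ≤ b + S + 2 * (b + S) ^ (1/2 : ℝ) * w + w ^ 2 := by gcongr
    _ = ((b + S) ^ (1/2 : ℝ) + w) ^ 2 := by rw [add_sq, hsq]

lemma rpow_half_sum_add_le {ι : Type*} (s : Finset ι) {A B w : ι → ℝ≥0∞}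
    (h : ∀ j ∈ s, A j ^ (1/2 : ℝ) ≤ B j ^ (1/2 : ℝ) + w j) (C : ℝ≥0∞) :
    (∑ j ∈ s, A j + C) ^ (1/2 : ℝ) ≤ (∑ j ∈ s, B j + C) ^ (1/2 : ℝ) + ∑ j ∈ s, w j := by
  classical
  induction s using Finset.induction_on generalizing C with
  | empty => simp
  | @insert a s ha ih =>
    simp only [Finset.forall_mem_insert] at h
    calc (∑ j ∈ insert a s, A j + C) ^ (1/2 : ℝ)
        = (A a + (∑ j ∈ s, A j + C)) ^ (1/2 : ℝ) := by rw [Finset.sum_insert ha, add_assoc]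
      _ ≤ (B a + (∑ j ∈ s, A j + C)) ^ (1/2 : ℝ) + w a := rpow_half_add_le_of_le h.1 _
      _ = (∑ j ∈ s, A j + (B a + C)) ^ (1/2 : ℝ) + w a := by ring_nf
      _ ≤ (∑ j ∈ s, B j + (B a + C)) ^ (1/2 : ℝ) + ∑ j ∈ s, w j + w a := by
        gcongr; exact ih h.2 _
      _ = (∑ j ∈ insert a s, B j + C) ^ (1/2 : ℝ) + ∑ j ∈ insert a s, w j := by
        rw [Finset.sum_insert ha, Finset.sum_insert ha]; ring_nf

lemma abs_toReal_sub_toReal_le {a b c : ℝ≥0∞} (hc : c ≠ ⊤) (hab : a ≤ b + c)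
    (hba : b ≤ a + c) : |a.toReal - b.toReal| ≤ c.toReal := by
  by_cases ha : a = ⊤
  · have hb : b = ⊤ := by simpa [ha, hc] using hab
    simp [ha, hb]
  · have hb : b ≠ ⊤ := ne_top_of_le_ne_top (add_ne_top.2 ⟨ha, hc⟩) hba
    have h₁ := toReal_mono (add_ne_top.2 ⟨hb, hc⟩) hab
    have h₂ := toReal_mono (add_ne_top.2 ⟨ha, hc⟩) hba
    rw [toReal_add hb hc] at h₁
    rw [toReal_add ha hc] at h₂
    exact abs_sub_le_iff.2 ⟨by linarith, by linarith⟩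

end ENNReal

section Coupling

variable {α β : Type*} [MeasurableSpace α] [MeasurableSpace β]

lemma map_prodMk_mem_couplings (τ : Measure β) [IsProbabilityMeasure τ] {f g : β → α}
    (hf : Measurable f) (hg : Measurable g) :
    τ.map (fun b => (f b, g b)) ∈ couplings (τ.map f) (τ.map g) :=
  ⟨Measure.isProbabilityMeasure_map (hf.prodMk hg).aemeasurable,
    by rw [Measure.map_map measurable_fst (hf.prodMk hg)]; rfl,
    by rw [Measure.map_map measurable_snd (hf.prodMk hg)]; rfl⟩

variable [PseudoMetricSpace α] [OpensMeasurableSpace α] [SecondCountableTopology α]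

lemma measurable_ofReal_dist_sq :
    Measurable fun p : α × α => ENNReal.ofReal (dist p.1 p.2 ^ 2) := by
  fun_prop

lemma W2sq_map_le_lintegral (τ : Measure β) [IsProbabilityMeasure τ] {f g : β → α}
    (hf : Measurable f) (hg : Measurable g) :
    W2sq (τ.map f) (τ.map g) ≤ ∫⁻ b, ENNReal.ofReal (dist (f b) (g b) ^ 2) ∂τ :=
  (iInf₂_le _ (map_prodMk_mem_couplings τ hf hg)).trans_eq
    (lintegral_map measurable_ofReal_dist_sq (hf.prodMk hg))

lemma W2sq_comm (μ ν : Measure α) : W2sq μ ν = W2sq ν μ := by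
  suffices h : ∀ μ ν : Measure α, W2sq μ ν ≤ W2sq ν μ from le_antisymm (h μ ν) (h ν μ)
  intro μ ν
  refine le_iInf₂ fun π ⟨_, hfst, hsnd⟩ => ?_
  subst hfst hsnd
  simpa only [dist_comm] using W2sq_map_le_lintegral π measurable_snd measurable_fst

lemma W2sq_le_ofReal_diam_sq {Θ : Set α} (hΘ : Bornology.IsBounded Θ) {μ ν : Measure α}
    [IsProbabilityMeasure μ] [IsProbabilityMeasure ν] (hμ : μ Θᶜ = 0) (hν : ν Θᶜ = 0) :
    W2sq μ ν ≤ ENNReal.ofReal (Metric.diam Θ ^ 2) := by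
  have hmem : ∀ᵐ p ∂μ.prod ν, p.1 ∈ Θ ∧ p.2 ∈ Θ :=
    (Measure.quasiMeasurePreserving_fst.ae (ae_iff.2 hμ)).and
      (Measure.quasiMeasurePreserving_snd.ae (ae_iff.2 hν))
  calc W2sq μ ν = W2sq ((μ.prod ν).map Prod.fst) ((μ.prod ν).map Prod.snd) := by simp
    _ ≤ ∫⁻ p, ENNReal.ofReal (dist p.1 p.2 ^ 2) ∂μ.prod ν :=
      W2sq_map_le_lintegral _ measurable_fst measurable_snd
    _ ≤ ∫⁻ _, ENNReal.ofReal (Metric.diam Θ ^ 2) ∂μ.prod ν := lintegral_mono_ae <| hmem.mono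
      fun p hp => ofReal_le_ofReal <| pow_le_pow_left₀ dist_nonneg
        (Metric.dist_le_diam_of_mem hΘ hp.1 hp.2) 2
    _ = ENNReal.ofReal (Metric.diam Θ ^ 2) := by simp

lemma lintegral_dist_sq_rpow_half_le (τ : Measure β) {f g h : β → α}
    (hf : AEMeasurable f τ) (hg : AEMeasurable g τ) (hh : AEMeasurable h τ) :
    (∫⁻ b, ENNReal.ofReal (dist (f b) (h b) ^ 2) ∂τ) ^ (1/2 : ℝ) ≤
      (∫⁻ b, ENNReal.ofReal (dist (f b) (g b) ^ 2) ∂τ) ^ (1/2 : ℝ) +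
        (∫⁻ b, ENNReal.ofReal (dist (g b) (h b) ^ 2) ∂τ) ^ (1/2 : ℝ) := by
  have hsq (x y : α) : ENNReal.ofReal (dist x y ^ 2) = edist x y ^ (2 : ℝ) := by
    rw [edist_dist, rpow_two, ofReal_pow dist_nonneg]
  simp only [hsq]
  calc (∫⁻ b, edist (f b) (h b) ^ (2 : ℝ) ∂τ) ^ (1/2 : ℝ)
      ≤ (∫⁻ b, (edist (f b) (g b) + edist (g b) (h b)) ^ (2 : ℝ) ∂τ) ^ (1/2 : ℝ) := by
        gcongr with b; exact edist_triangle _ _ _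
    _ ≤ _ := ENNReal.lintegral_Lp_add_le (hf.edist hg) (hg.edist hh) one_le_two

end Coupling

section Gluing

variable {α : Type*} [MeasurableSpace α] [StandardBorelSpace α] [Nonempty α]

lemma exists_gluing {μ ν ρ : Measure α} {π₁ π₂ : Measure (α × α)}
    (h₁ : π₁ ∈ couplings μ ν) (h₂ : π₂ ∈ couplings ν ρ) :
    ∃ τ : Measure ((α × α) × α), IsProbabilityMeasure τ ∧
      τ.map Prod.fst = π₁ ∧ τ.map (fun p => (p.1.2, p.2)) = π₂ := by
  -- `τ` draws `(x, y)` from `π₁`, then `z` from the conditional law of `π₂` given its first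
  -- coordinate `y`.
  obtain ⟨_, -, hπ₁snd⟩ := h₁
  obtain ⟨_, hπ₂fst, -⟩ := h₂
  refine ⟨π₁ ⊗ₘ Kernel.prodMkLeft α π₂.condKernel, inferInstance,
    Measure.fst_compProd _ _, ?_⟩
  ext s hs
  have hmeas : Measurable fun p : (α × α) × α => (p.1.2, p.2) := by fun_prop
  conv_rhs => rw [← π₂.disintegrate π₂.condKernel, Measure.compProd_apply hs, Measure.fst,
    hπ₂fst, ← hπ₁snd, lintegral_map (Kernel.measurable_kernel_prodMk_left hs) measurable_snd]
  rw [Measure.map_apply hmeas hs, Measure.compProd_apply (hmeas hs)]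
  rfl

variable [PseudoMetricSpace α] [OpensMeasurableSpace α] [SecondCountableTopology α]

lemma W2sq_rpow_half_le_of_mem_couplings {μ ν ρ : Measure α} {π₁ π₂ : Measure (α × α)}
    (h₁ : π₁ ∈ couplings μ ν) (h₂ : π₂ ∈ couplings ν ρ) :
    W2sq μ ρ ^ (1/2 : ℝ) ≤ (∫⁻ p, ENNReal.ofReal (dist p.1 p.2 ^ 2) ∂π₁) ^ (1/2 : ℝ) +
      (∫⁻ p, ENNReal.ofReal (dist p.1 p.2 ^ 2) ∂π₂) ^ (1/2 : ℝ) := by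
  obtain ⟨τ, _, hτ₁, hτ₂⟩ := exists_gluing h₁ h₂
  have hmeas₂ : Measurable fun p : (α × α) × α => (p.1.2, p.2) := by fun_prop
  have hμ : τ.map (fun p => p.1.1) = μ := by
    rw [← h₁.2.1, ← hτ₁, Measure.map_map measurable_fst measurable_fst]; rfl
  have hρ : τ.map (fun p => p.2) = ρ := by
    rw [← h₂.2.2, ← hτ₂, Measure.map_map measurable_snd hmeas₂]; rfl
  rw [← hμ, ← hρ, ← hτ₁, ← hτ₂, lintegral_map measurable_ofReal_dist_sq measurable_fst,
    lintegral_map measurable_ofReal_dist_sq hmeas₂]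
  calc _ ≤ (∫⁻ p, ENNReal.ofReal (dist p.1.1 p.2 ^ 2) ∂τ) ^ (1/2 : ℝ) :=
        rpow_le_rpow (W2sq_map_le_lintegral τ (by fun_prop) measurable_snd) (by norm_num)
    _ ≤ _ := lintegral_dist_sq_rpow_half_le τ (by fun_prop) (by fun_prop) (by fun_prop)

lemma W2sq_rpow_half_triangle (μ ν ρ : Measure α) :
    W2sq μ ρ ^ (1/2 : ℝ) ≤ W2sq μ ν ^ (1/2 : ℝ) + W2sq ν ρ ^ (1/2 : ℝ) := by
  have hhalf : (0 : ℝ) < 1/2 := by norm_num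
  calc W2sq μ ρ ^ (1/2 : ℝ)
      ≤ ⨅ π₂ ∈ couplings ν ρ, ⨅ π₁ ∈ couplings μ ν,
          (∫⁻ p, ENNReal.ofReal (dist p.1 p.2 ^ 2) ∂π₁) ^ (1/2 : ℝ) +
            (∫⁻ p, ENNReal.ofReal (dist p.1 p.2 ^ 2) ∂π₂) ^ (1/2 : ℝ) :=
        le_iInf₂ fun _ h₂ => le_iInf₂ fun _ h₁ => W2sq_rpow_half_le_of_mem_couplings h₁ h₂
    _ = W2sq μ ν ^ (1/2 : ℝ) + W2sq ν ρ ^ (1/2 : ℝ) := by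
        simp only [W2sq, Wcost, iInf_rpow hhalf, ENNReal.iInf_add, ENNReal.add_iInf]

end Gluing

lemma mwmInf_rpow_half_le {α : Type*} [MeasurableSpace α] [PseudoMetricSpace α]
    [OpensMeasurableSpace α] [SecondCountableTopology α] [StandardBorelSpace α] [Nonempty α]
    (Θ : Set α) (m : ℕ) (k : Fin m → ℕ) (M : ℕ) (lam : ℝ) (P Q : Fin m → Measure α) :
    mwmInf Θ m k M lam Q ^ (1/2 : ℝ) ≤
      mwmInf Θ m k M lam P ^ (1/2 : ℝ) + ∑ j, W2sq (P j) (Q j) ^ (1/2 : ℝ) := by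
  have hhalf : (0 : ℝ) < 1/2 := by norm_num
  refine iInf_rpow_le_iInf_rpow_add hhalf fun G => iInf_rpow_le_iInf_rpow_add hhalf fun _ =>
    iInf_rpow_le_iInf_rpow_add hhalf fun _ => iInf_rpow_le_iInf_rpow_add hhalf fun _ => ?_
  exact rpow_half_sum_add_le _ (fun j _ => W2sq_rpow_half_triangle (G j) (P j) (Q j)) _

theorem mwm_inf_sqrt_diff_le_general {d : ℕ} (Θ : Set (EuclideanSpace ℝ (Fin d)))
    (hΘ : IsCompact Θ)
    (m : ℕ) (k : Fin m → ℕ)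
    (M : ℕ) (lam : ℝ)
    (P Pn : Fin m → Measure (EuclideanSpace ℝ (Fin d)))
    (hP : ∀ j, IsProbabilityMeasure (P j) ∧ (P j) Θᶜ = 0)
    (hPn : ∀ j, IsProbabilityMeasure (Pn j) ∧ (Pn j) Θᶜ = 0) :
    |((mwmInf Θ m k M lam Pn) ^ (1 / 2 : ℝ)).toReal -
        ((mwmInf Θ m k M lam P) ^ (1 / 2 : ℝ)).toReal| ≤
      ∑ j, ((W2sq (Pn j) (P j)) ^ (1 / 2 : ℝ)).toReal := by
  have hfin (j : Fin m) : W2sq (Pn j) (P j) ^ (1/2 : ℝ) ≠ ⊤ := by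
    obtain ⟨_, hPnΘ⟩ := hPn j
    obtain ⟨_, hPΘ⟩ := hP j
    exact rpow_ne_top_of_nonneg (by norm_num) <| ne_top_of_le_ne_top ofReal_ne_top <|
      W2sq_le_ofReal_diam_sq hΘ.isBounded hPnΘ hPΘ
  rw [← toReal_sum fun j _ => hfin j]
  refine abs_toReal_sub_toReal_le (sum_ne_top.2 fun j _ => hfin j) ?_ ?_
  · simpa only [W2sq_comm (P _)] using mwmInf_rpow_half_le Θ m k M lam P Pn
  · exact mwmInf_rpow_half_le Θ m k M lam Pn P

/-- Theorem 4(ii), deterministic bound: for compact `Θ ⊂ ℝ^d`,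
`| (inf f_n)^{1/2} − (inf f)^{1/2} | ≤ Σ_j W_2(P^j_{n_j}, P^j)`. -/
theorem mwm_inf_sqrt_diff_le {d : ℕ} (Θ : Set (EuclideanSpace ℝ (Fin d)))
    (hΘ : IsCompact Θ) (hΘne : Θ.Nonempty)
    (m : ℕ) (hm : 1 ≤ m) (k : Fin m → ℕ) (hk : ∀ j, 1 ≤ k j)
    (M : ℕ) (hM : 1 ≤ M) (lam : ℝ) (hlam : 0 < lam)
    (P Pn : Fin m → Measure (EuclideanSpace ℝ (Fin d)))
    (hP : ∀ j, IsProbabilityMeasure (P j) ∧ (P j) Θᶜ = 0)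
    (hPn : ∀ j, IsProbabilityMeasure (Pn j) ∧ (Pn j) Θᶜ = 0) :
    |((mwmInf Θ m k M lam Pn) ^ (1 / 2 : ℝ)).toReal -
        ((mwmInf Θ m k M lam P) ^ (1 / 2 : ℝ)).toReal| ≤
      ∑ j, ((W2sq (Pn j) (P j)) ^ (1 / 2 : ℝ)).toReal :=
  mwm_inf_sqrt_diff_le_general Θ hΘ m k M lam P Pn hP hPn
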